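/- arXiv:math-ph/0404003 — 6 statements merged into one kernel-verified Lean document; each statement's English description precedes it below -/
import Mathlib

section
/- Let w : ℝ² → ℝ² be a smooth (infinitely differentiable) vector function satisfying y₁·w₁(y) + y₂·w₂(y) = 0 for all y = (y₁,y₂) ∈ ℝ². Then there exists a smooth function g : ℝ² → ℝ such that w₁(y) = y₂·g(y) and w₂(y) = −y₁·g(y) for all y ∈ ℝ². -/
set_option maxHeartbeats 1000000

open MeasureTheory
open scoped ENNReal NNReal

theorem param_integral_contDiff_aux (n : ℕ) : ∀ (F : Type) [NormedAddCommGroup F]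
    [NormedSpace ℝ F] (φ : ℝ → ℝ) (v : ℝ × ℝ → F), Continuous φ → ContDiff ℝ (⊤ : ℕ∞) v →
    ContDiff ℝ n (fun y => ∫ t in (0:ℝ)..1, φ t • v (t • y)) := by
  induction n with
  | zero =>
    intro F _ _ φ v hφ hv
    rw [Nat.cast_zero, contDiff_zero]
    apply intervalIntegral.continuous_parametric_intervalIntegral_of_continuous'
    exact (hφ.comp continuous_snd).smul (hv.continuous.comp (continuous_snd.smul continuous_fst))
  | succ n ih =>
    intro F _ _ φ v hφ hv
    have hv1 : ContDiff ℝ (⊤ : ℕ∞) (fderiv ℝ v) := hv.fderiv_right (by simp)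
    have hderiv : ∀ y₀ : ℝ × ℝ, HasFDerivAt (fun y => ∫ t in (0:ℝ)..1, φ t • v (t • y))
        (∫ t in (0:ℝ)..1, (φ t * t) • fderiv ℝ v (t • y₀)) y₀ := by
      intro y₀
      have hv1c : Continuous (fderiv ℝ v) := hv1.continuous
      have hvd : Differentiable ℝ v := hv.differentiable (by simp)
      have hK : IsCompact (Metric.closedBall y₀ 1 ×ˢ Set.Icc (0:ℝ) 1) :=
        (isCompact_closedBall _ _).prod isCompact_Icc
      obtain ⟨C, hC⟩ := hK.exists_bound_of_continuousOn
        (f := fun p : (ℝ × ℝ) × ℝ => (φ p.2 * p.2) • fderiv ℝ v (p.2 • p.1))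
        (((hφ.comp continuous_snd).mul continuous_snd).smul
          (hv1c.comp (continuous_snd.smul continuous_fst))).continuousOn
      refine intervalIntegral.hasFDerivAt_integral_of_dominated_of_fderiv_le (μ := volume)
        (bound := fun _ => C) (F' := fun y t => (φ t * t) • fderiv ℝ v (t • y))
        (Metric.closedBall_mem_nhds y₀ one_pos) ?_ ?_ ?_ ?_ ?_ ?_
      · exact Filter.Eventually.of_forall fun y =>
          (hφ.smul (hv.continuous.comp (continuous_id.smul continuous_const))).aestronglyMeasurable
      · exact (hφ.smul (hv.continuous.comp (continuous_id.smul continuous_const))).intervalIntegrable _ _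
      · exact ((hφ.mul continuous_id).smul
          (hv1c.comp (continuous_id.smul continuous_const))).aestronglyMeasurable
      · refine Filter.Eventually.of_forall fun t ht y hy => hC (y, t) ⟨hy, ?_⟩
        rw [Set.uIoc_of_le zero_le_one] at ht
        exact ⟨ht.1.le, ht.2⟩
      · exact continuous_const.intervalIntegrable _ _
      · refine Filter.Eventually.of_forall fun t _ y _ => ?_
        have h1 : HasFDerivAt (fun y : ℝ × ℝ => t • y) (t • ContinuousLinearMap.id ℝ (ℝ × ℝ)) y :=
          (hasFDerivAt_id y).const_smul t
        have h2 := ((hvd (t • y)).hasFDerivAt.comp y h1).const_smul (φ t)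
        convert h2 using 1
        · rfl
        · refine ContinuousLinearMap.ext fun z => ?_
          simp [smul_smul]
    rw [Nat.cast_succ, contDiff_succ_iff_fderiv]
    refine ⟨fun y => (hderiv y).differentiableAt, by simp, ?_⟩
    have hfd : fderiv ℝ (fun y => ∫ t in (0:ℝ)..1, φ t • v (t • y))
        = fun y => ∫ t in (0:ℝ)..1, (φ t * t) • fderiv ℝ v (t • y) :=
      funext fun y => (hderiv y).fderiv
    rw [hfd]
    exact ih _ (fun t => φ t * t) (fderiv ℝ v) (hφ.mul continuous_id) hv1

/-- A smooth vector field `w` on `ℝ²` orthogonal to the position vector,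
i.e. `y₁·w₁(y) + y₂·w₂(y) = 0`, is a smooth multiple of the rotated
position vector `(y₂, −y₁)`. -/
theorem stmt_0 (w : ℝ × ℝ → ℝ × ℝ) (hw : ContDiff ℝ (⊤ : ℕ∞) w)
    (horth : ∀ y : ℝ × ℝ, y.1 * (w y).1 + y.2 * (w y).2 = 0) :
    ∃ g : ℝ × ℝ → ℝ, ContDiff ℝ (⊤ : ℕ∞) g ∧
      ∀ y : ℝ × ℝ, (w y).1 = y.2 * g y ∧ (w y).2 = -y.1 * g y := by
  have hwd : Differentiable ℝ w := hw.differentiable (by simp)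
  have hDsm : ContDiff ℝ (⊤ : ℕ∞) (fderiv ℝ w) := hw.fderiv_right (by simp)
  set u : ℝ × ℝ → ℝ := fun z => (fderiv ℝ w z (0,1)).1 - (fderiv ℝ w z (1,0)).2 with hu_def
  have hu : ContDiff ℝ (⊤ : ℕ∞) u :=
    ((hDsm.clm_apply contDiff_const).fst).sub ((hDsm.clm_apply contDiff_const).snd)
  -- differentiated orthogonality relation
  have hkey : ∀ (z v : ℝ × ℝ), v.1 * (w z).1 + z.1 * (fderiv ℝ w z v).1
      + (v.2 * (w z).2 + z.2 * (fderiv ℝ w z v).2) = 0 := by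
    intro z v
    have hD := (hwd z).hasFDerivAt
    have h1 : HasFDerivAt (fun y : ℝ × ℝ => y.1 * (w y).1 + y.2 * (w y).2)
        ((z.1 • ((ContinuousLinearMap.fst ℝ ℝ ℝ).comp (fderiv ℝ w z))
          + (w z).1 • (ContinuousLinearMap.fst ℝ ℝ ℝ)) +
         (z.2 • ((ContinuousLinearMap.snd ℝ ℝ ℝ).comp (fderiv ℝ w z))
          + (w z).2 • (ContinuousLinearMap.snd ℝ ℝ ℝ))) z :=
      ((hasFDerivAt_fst.mul hD.fst)).add ((hasFDerivAt_snd.mul hD.snd))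
    have h2 : HasFDerivAt (fun y : ℝ × ℝ => y.1 * (w y).1 + y.2 * (w y).2)
        (0 : (ℝ × ℝ) →L[ℝ] ℝ) z := by
      have : (fun y : ℝ × ℝ => y.1 * (w y).1 + y.2 * (w y).2) = fun _ => (0:ℝ) :=
        funext horth
      rw [this]; exact hasFDerivAt_const 0 z
    have h4 := congrArg (fun L : (ℝ × ℝ) →L[ℝ] ℝ => L v) (h1.unique h2)
    simp only [ContinuousLinearMap.add_apply, ContinuousLinearMap.smul_apply,
      ContinuousLinearMap.comp_apply, ContinuousLinearMap.coe_fst',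
      ContinuousLinearMap.coe_snd', ContinuousLinearMap.zero_apply, smul_eq_mul] at h4
    linarith
  set G : ℝ × ℝ → ℝ := fun y => ∫ t in (0:ℝ)..1, t * u (t • y) with hG_def
  -- decomposition of directional derivatives
  have hdec : ∀ (z y : ℝ × ℝ), fderiv ℝ w z y
      = y.1 • fderiv ℝ w z (1,0) + y.2 • fderiv ℝ w z (0,1) := by
    intro z y
    rw [← _root_.map_smul, ← _root_.map_smul, ← map_add]
    congr 1
    apply Prod.ext <;> simp
  have hcont : ∀ y : ℝ × ℝ, Continuous fun t : ℝ => fderiv ℝ w (t • y) y := by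
    intro y
    exact ((hDsm.continuous.comp (continuous_id.smul continuous_const)).clm_apply
      continuous_const)
  -- First identity : w₁ = y₂ · G
  have hA : ∀ y : ℝ × ℝ, (w y).1 = y.2 * G y := by
    intro y
    have hderiv : ∀ t ∈ Set.uIcc (0:ℝ) 1, HasDerivAt (fun s : ℝ => s * (w (s • y)).1)
        ((w (t • y)).1 + t * (fderiv ℝ w (t • y) y).1) t := by
      intro t _
      have hline : HasDerivAt (fun s : ℝ => s • y) y t := by
        simpa using (hasDerivAt_id t).smul_const y
      have hψ : HasDerivAt (fun s : ℝ => w (s • y)) (fderiv ℝ w (t • y) y) t := by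
        simpa [Function.comp_def] using (hwd (t • y)).hasFDerivAt.comp_hasDerivAt t hline
      have hψ1 : HasDerivAt (fun s : ℝ => (w (s • y)).1) ((fderiv ℝ w (t • y) y).1) t := by
        simpa [Function.comp_def] using ((ContinuousLinearMap.fst ℝ ℝ ℝ).hasFDerivAt.comp_hasDerivAt t hψ)
      simpa [Pi.mul_def] using (hasDerivAt_id t).mul hψ1
    have hint : IntervalIntegrable
        (fun t : ℝ => (w (t • y)).1 + t * (fderiv ℝ w (t • y) y).1) volume 0 1 := by
      apply Continuous.intervalIntegrable
      exact ((hw.continuous.comp (continuous_id.smul continuous_const)).fst).add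
        (continuous_id.mul ((hcont y).fst))
    have hFTC := intervalIntegral.integral_eq_sub_of_hasDerivAt hderiv hint
    have heq : ∀ t : ℝ, (w (t • y)).1 + t * (fderiv ℝ w (t • y) y).1
        = y.2 * (t * u (t • y)) := by
      intro t
      have hk := hkey (t • y) (1,0)
      have hd := hdec (t • y) y
      have h1 : (fderiv ℝ w (t • y) y).1
          = y.1 * (fderiv ℝ w (t • y) (1,0)).1 + y.2 * (fderiv ℝ w (t • y) (0,1)).1 := by
        rw [hd]; simp
      simp only [Prod.smul_fst, Prod.smul_snd, smul_eq_mul] at hk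
      rw [h1]
      simp only [hu_def]
      linear_combination hk
    have : (∫ t in (0:ℝ)..1, ((w (t • y)).1 + t * (fderiv ℝ w (t • y) y).1))
        = ∫ t in (0:ℝ)..1, y.2 * (t * u (t • y)) := by
      apply intervalIntegral.integral_congr
      intro t _; exact heq t
    rw [this, intervalIntegral.integral_const_mul] at hFTC
    simpa [hG_def] using hFTC.symm
  -- Second identity : w₂ = −y₁ · G
  have hB : ∀ y : ℝ × ℝ, (w y).2 = -y.1 * G y := by
    intro y
    have hderiv : ∀ t ∈ Set.uIcc (0:ℝ) 1, HasDerivAt (fun s : ℝ => s * (w (s • y)).2)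
        ((w (t • y)).2 + t * (fderiv ℝ w (t • y) y).2) t := by
      intro t _
      have hline : HasDerivAt (fun s : ℝ => s • y) y t := by
        simpa using (hasDerivAt_id t).smul_const y
      have hψ : HasDerivAt (fun s : ℝ => w (s • y)) (fderiv ℝ w (t • y) y) t := by
        simpa [Function.comp_def] using (hwd (t • y)).hasFDerivAt.comp_hasDerivAt t hline
      have hψ2 : HasDerivAt (fun s : ℝ => (w (s • y)).2) ((fderiv ℝ w (t • y) y).2) t := by
        simpa [Function.comp_def] using ((ContinuousLinearMap.snd ℝ ℝ ℝ).hasFDerivAt.comp_hasDerivAt t hψ)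
      simpa [Pi.mul_def] using (hasDerivAt_id t).mul hψ2
    have hint : IntervalIntegrable
        (fun t : ℝ => (w (t • y)).2 + t * (fderiv ℝ w (t • y) y).2) volume 0 1 := by
      apply Continuous.intervalIntegrable
      exact ((hw.continuous.comp (continuous_id.smul continuous_const)).snd).add
        (continuous_id.mul ((hcont y).snd))
    have hFTC := intervalIntegral.integral_eq_sub_of_hasDerivAt hderiv hint
    have heq : ∀ t : ℝ, (w (t • y)).2 + t * (fderiv ℝ w (t • y) y).2
        = -y.1 * (t * u (t • y)) := by
      intro t
      have hk := hkey (t • y) (0,1)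
      have hd := hdec (t • y) y
      have h1 : (fderiv ℝ w (t • y) y).2
          = y.1 * (fderiv ℝ w (t • y) (1,0)).2 + y.2 * (fderiv ℝ w (t • y) (0,1)).2 := by
        rw [hd]; simp
      simp only [Prod.smul_fst, Prod.smul_snd, smul_eq_mul] at hk
      rw [h1]
      simp only [hu_def]
      linear_combination hk
    have : (∫ t in (0:ℝ)..1, ((w (t • y)).2 + t * (fderiv ℝ w (t • y) y).2))
        = ∫ t in (0:ℝ)..1, -y.1 * (t * u (t • y)) := by
      apply intervalIntegral.integral_congr
      intro t _; exact heq t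
    rw [this, intervalIntegral.integral_const_mul] at hFTC
    simpa [hG_def] using hFTC.symm
  -- Smoothness of G, by differentiation under the integral sign
  have hGsm : ContDiff ℝ (⊤ : ℕ∞) G := by
    rw [contDiff_infty]
    intro n
    exact param_integral_contDiff_aux n ℝ (fun t => t) u continuous_id hu
  exact ⟨G, hGsm, fun y => ⟨hA y, hB y⟩⟩
end

section
/- Let H be an invertible symmetric 2×2 real matrix and let z : ℝ² → ℝ² be a vector function whose components are homogeneous polynomials of degree k ≥ 1 in x = (x₁,x₂). If ⟨z(x), Hx⟩ = 0 for all x ∈ ℝ², then there exists a homogeneous polynomial α of degree k−1 such that z(x) = α(x)·((Hx)₂, −(Hx)₁) for all x, i.e. z = α·T(Hx) where T is the 2×2 matrix with rows (0,1) and (−1,0). -/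
open MvPolynomial Finset

noncomputable def linRow (M : Matrix (Fin 2) (Fin 2) ℝ) (i : Fin 2) : MvPolynomial (Fin 2) ℝ :=
  ∑ j, C (M i j) * X j

lemma eval_linRow (M : Matrix (Fin 2) (Fin 2) ℝ) (i : Fin 2) (x : Fin 2 → ℝ) :
    eval x (linRow M i) = M.mulVec x i := by
  simp [linRow, Matrix.mulVec, dotProduct]

lemma linRow_isHomogeneous (M : Matrix (Fin 2) (Fin 2) ℝ) (i : Fin 2) :
    (linRow M i).IsHomogeneous 1 :=
  IsHomogeneous.sum _ _ _ fun j _ => isHomogeneous_C_mul_X _ _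

lemma aeval_linRow (M N : Matrix (Fin 2) (Fin 2) ℝ) (i : Fin 2) :
    aeval (linRow M) (linRow N i) = linRow (N * M) i := by
  simp only [linRow, map_sum, map_mul, aeval_C, aeval_X, Matrix.mul_apply,
    algebraMap_eq, Finset.mul_sum, Finset.sum_mul, mul_assoc]
  rw [Finset.sum_comm]

lemma linRow_one (i : Fin 2) : linRow (1 : Matrix (Fin 2) (Fin 2) ℝ) i = X i := by
  simp [linRow, Matrix.one_apply]

lemma aeval_linRow_linRow {M N : Matrix (Fin 2) (Fin 2) ℝ} (h : N * M = 1)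
    (p : MvPolynomial (Fin 2) ℝ) : aeval (linRow M) (aeval (linRow N) p) = p := by
  have key : (aeval (linRow M)).comp (aeval (linRow N)) =
      AlgHom.id ℝ (MvPolynomial (Fin 2) ℝ) := by
    apply MvPolynomial.algHom_ext
    intro i
    rw [AlgHom.comp_apply, aeval_X, aeval_linRow, h, linRow_one, AlgHom.id_apply]
  have := congrArg (fun f => f p) key
  simpa using this

lemma comp_mul_lin (q l : MvPolynomial (Fin 2) ℝ) (hl : l.IsHomogeneous 1) (d : ℕ) :
    homogeneousComponent (d + 1) (q * l) = homogeneousComponent d q * l := by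
  conv_lhs => rw [q.as_sum]
  conv_rhs => rw [q.as_sum]
  rw [Finset.sum_mul, map_sum, map_sum, Finset.sum_mul]
  refine Finset.sum_congr rfl fun e _ => ?_
  have h1 : (monomial e (coeff e q) * l).IsHomogeneous (e.degree + 1) :=
    (isHomogeneous_monomial _ rfl).mul hl
  rw [homogeneousComponent_of_mem h1,
    homogeneousComponent_of_mem (isHomogeneous_monomial (n := e.degree) (coeff e q) rfl)]
  by_cases hd : d = e.degree
  · simp [hd]
  · rw [if_neg (by omega), if_neg hd, zero_mul]

lemma hom_factor (q l : MvPolynomial (Fin 2) ℝ) (hl : l.IsHomogeneous 1) (hl0 : l ≠ 0)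
    (k : ℕ) (hk : 1 ≤ k) (h : (q * l).IsHomogeneous k) : q.IsHomogeneous (k - 1) := by
  have hq : ∀ d, d ≠ k - 1 → homogeneousComponent d q = 0 := by
    intro d hd
    have h2 : homogeneousComponent (d + 1) (q * l) = 0 := by
      rw [homogeneousComponent_of_mem h, if_neg (by omega)]
    rw [comp_mul_lin q l hl d] at h2
    exact (mul_eq_zero.mp h2).resolve_right hl0
  have hqq : q = homogeneousComponent (k - 1) q := by
    conv_lhs => rw [← q.sum_homogeneousComponent]
    refine Finset.sum_eq_single _ (fun b _ hb => hq b hb) (fun hmem => ?_)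
    refine homogeneousComponent_eq_zero _ _ ?_
    simp only [Finset.mem_range, not_lt] at hmem
    omega
  rw [hqq]
  exact homogeneousComponent_isHomogeneous _ _

lemma X_dvd_of_coeff (p : MvPolynomial (Fin 2) ℝ) (i : Fin 2)
    (h : ∀ d : Fin 2 →₀ ℕ, d i = 0 → coeff d p = 0) : X i ∣ p := by
  rw [p.as_sum]
  refine Finset.dvd_sum fun d _ => ?_
  rw [X_dvd_monomial]
  by_cases h0 : d i = 0
  · exact Or.inl (h d h0)
  · exact Or.inr h0

/-- If the components of `z` are homogeneous polynomials of degree `k ≥ 1`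
and `⟨z(x), Hx⟩ = 0` for an invertible symmetric matrix `H`, then
`z = α · T(Hx)` for a homogeneous polynomial `α` of degree `k − 1`,
where `T(Hx) = ((Hx)₂, −(Hx)₁)`. -/
theorem stmt_1 (H : Matrix (Fin 2) (Fin 2) ℝ) (hH : IsUnit H) (hsymm : H.IsSymm)
    (k : ℕ) (hk : 1 ≤ k) (z₁ z₂ : MvPolynomial (Fin 2) ℝ)
    (hz₁ : z₁.IsHomogeneous k) (hz₂ : z₂.IsHomogeneous k)
    (horth : ∀ x : Fin 2 → ℝ,
      eval x z₁ * H.mulVec x 0 + eval x z₂ * H.mulVec x 1 = 0) :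
    ∃ α : MvPolynomial (Fin 2) ℝ, α.IsHomogeneous (k - 1) ∧
      ∀ x : Fin 2 → ℝ,
        eval x z₁ = eval x α * H.mulVec x 1 ∧
        eval x z₂ = eval x α * (-(H.mulVec x 0)) := by
  have hdet : IsUnit H.det := (Matrix.isUnit_iff_isUnit_det H).mp hH
  have hinv1 : H * H⁻¹ = 1 := Matrix.mul_nonsing_inv H hdet
  have hinv2 : H⁻¹ * H = 1 := Matrix.nonsing_inv_mul H hdet
  -- the orthogonality as a polynomial identity
  have hP : z₁ * linRow H 0 + z₂ * linRow H 1 = 0 := by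
    apply MvPolynomial.funext
    intro x
    simp only [map_add, map_mul, eval_linRow, map_zero]
    exact horth x
  -- move to standard coordinates
  set w₁ := aeval (linRow H⁻¹) z₁ with hw₁def
  set w₂ := aeval (linRow H⁻¹) z₂ with hw₂def
  have hstd : ∀ i, aeval (linRow H⁻¹) (linRow H i) = X i := by
    intro i
    rw [aeval_linRow, hinv1, linRow_one]
  have hw : w₁ * X 0 + w₂ * X 1 = 0 := by
    have := congrArg (aeval (linRow H⁻¹)) hP
    simpa only [map_add, map_mul, map_zero, hstd] using this
  -- X 1 divides w₁
  have hdvd : X (1 : Fin 2) ∣ w₁ := by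
    apply X_dvd_of_coeff
    intro d hd
    have h0 := congrArg (coeff (d + Finsupp.single 0 1)) hw
    rw [coeff_add, coeff_mul_X, coeff_mul_X'] at h0
    rw [if_neg (by simp [Finsupp.mem_support_iff, hd])] at h0
    simpa using h0
  obtain ⟨β, hβ⟩ := hdvd
  have hw₂ : w₂ = -(β * X 0) := by
    have h1 : (β * X 0 + w₂) * X 1 = 0 := by
      rw [hβ] at hw; ring_nf at hw ⊢; linear_combination hw
    rcases mul_eq_zero.mp h1 with h2 | h2
    · linear_combination h2
    · exact absurd h2 (X_ne_zero 1)
  -- back to original coordinates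
  set α := aeval (linRow H) β with hαdef
  have hz₁' : z₁ = α * linRow H 1 := by
    have := aeval_linRow_linRow hinv2 z₁
    rw [← hw₁def, hβ, map_mul, aeval_X] at this
    rw [← this, ← hαdef]; ring
  have hz₂' : z₂ = -(α * linRow H 0) := by
    have := aeval_linRow_linRow hinv2 z₂
    rw [← hw₂def, hw₂, map_neg, map_mul, aeval_X] at this
    rw [← this, ← hαdef]
  -- the second row of H gives a nonzero linear form
  have hL1 : linRow H 1 ≠ 0 := by
    intro h0
    have hrow : ∀ j, H 1 j = 0 := by
      intro j
      have := congrArg (eval (Pi.single j 1)) h0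
      rw [eval_linRow, map_zero] at this
      simpa [Matrix.mulVec, dotProduct, Pi.single_apply] using this
    have : H.det = 0 := by
      rw [Matrix.det_fin_two, hrow 0, hrow 1]
      ring
    exact (isUnit_iff_ne_zero.mp hdet) this
  -- homogeneity of α
  have hαhom : α.IsHomogeneous (k - 1) := by
    apply hom_factor α (linRow H 1) (linRow_isHomogeneous H 1) hL1 k hk
    rw [← hz₁']
    exact hz₁
  refine ⟨α, hαhom, fun x => ?_⟩
  constructor
  · rw [hz₁', map_mul, eval_linRow]
  · rw [hz₂', map_neg, map_mul, eval_linRow]; ring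
end

section
/- Let U = (U₁, U₂) : ℝ² → ℝ² be a map whose components are polynomials, not both identically zero. Suppose that for all x ∈ ℝ²: U₁(x)·∂U/∂x₁(x) + U₂(x)·∂U/∂x₂(x) = (∂U₁/∂x₁(x) + ∂U₂/∂x₂(x))·U(x) (the equation ⟨U,∇⟩U = (div U)·U). Then the Jacobian determinant ∂U₁/∂x₁·∂U₂/∂x₂ − ∂U₁/∂x₂·∂U₂/∂x₁ vanishes identically on ℝ². -/
open MvPolynomial

/-- If a polynomial vector field `U = (U₁, U₂)`, not identically zero,
satisfies `⟨U,∇⟩U = (div U)·U`, then its Jacobian determinant vanishes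
identically. -/
theorem stmt_13 (U₁ U₂ : MvPolynomial (Fin 2) ℝ) (hU : ¬(U₁ = 0 ∧ U₂ = 0))
    (heq₁ : ∀ x : Fin 2 → ℝ,
      eval x U₁ * eval x (pderiv 0 U₁) + eval x U₂ * eval x (pderiv 1 U₁) =
        (eval x (pderiv 0 U₁) + eval x (pderiv 1 U₂)) * eval x U₁)
    (heq₂ : ∀ x : Fin 2 → ℝ,
      eval x U₁ * eval x (pderiv 0 U₂) + eval x U₂ * eval x (pderiv 1 U₂) =
        (eval x (pderiv 0 U₁) + eval x (pderiv 1 U₂)) * eval x U₂) :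
    ∀ x : Fin 2 → ℝ,
      eval x (pderiv 0 U₁) * eval x (pderiv 1 U₂) -
        eval x (pderiv 1 U₁) * eval x (pderiv 0 U₂) = 0 := by
  -- Polynomial identities from the pointwise hypotheses
  have h1 : U₂ * pderiv 1 U₁ = U₁ * pderiv 1 U₂ := by
    apply MvPolynomial.funext
    intro x
    have := heq₁ x
    simp only [map_mul]
    linarith [heq₁ x]
  have h2 : U₁ * pderiv 0 U₂ = U₂ * pderiv 0 U₁ := by
    apply MvPolynomial.funext
    intro x
    simp only [map_mul]
    linarith [heq₂ x]
  set J : MvPolynomial (Fin 2) ℝ :=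
    pderiv 0 U₁ * pderiv 1 U₂ - pderiv 1 U₁ * pderiv 0 U₂ with hJ
  have hJ1 : U₁ * J = 0 := by
    rw [hJ]
    linear_combination pderiv 0 U₁ * h1.symm - pderiv 1 U₁ * h2
  have hJ2 : U₂ * J = 0 := by
    rw [hJ]
    linear_combination pderiv 1 U₂ * h2.symm - pderiv 0 U₂ * h1
  have hJ0 : J = 0 := by
    rcases mul_eq_zero.mp hJ1 with h | h
    · rcases mul_eq_zero.mp hJ2 with h' | h'
      · exact absurd ⟨h, h'⟩ hU
      · exact h'
    · exact h
  intro x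
  have := congrArg (eval x) hJ0
  simpa [hJ] using this
end

section
/- Let f and g be homogeneous real polynomials in two variables of the same degree k ≥ 1, and suppose their Jacobian determinant vanishes identically: ∂f/∂x₁·∂g/∂x₂ − ∂f/∂x₂·∂g/∂x₁ = 0 for all x ∈ ℝ². Then f and g are linearly dependent: there exist real numbers (a, b) ≠ (0, 0) with a·f + b·g = 0 identically. -/
/-!
By Euler's identity, `k • (f ∂₀g - ∂₀f g)` equals `-X₁` times the Jacobian, so `f ∂₀g = ∂₀f g`.
Setting `X₁ = 1` turns this into the vanishing of the Wronskian of two one-variable polynomials.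
Dividing those by their gcd leaves a coprime pair with vanishing Wronskian, hence two constants,
which gives a linear relation; it lifts back because a homogeneous polynomial of degree `k` is
determined by its dehomogenization.
-/

open MvPolynomial

namespace Polynomial

variable {K : Type*} [Field K]

theorem wronskian_mul_mul (d u v : K[X]) :
    wronskian (d * u) (d * v) = d ^ 2 * wronskian u v := by
  simp only [wronskian, derivative_mul]
  ring

theorem exists_C_mul_add_C_mul_eq_zero_of_wronskian_eq_zero [CharZero K]
    {a b : K[X]} (hw : wronskian a b = 0) :
    ∃ c e : K, ¬(c = 0 ∧ e = 0) ∧ C c * a + C e * b = 0 := by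
  classical
  rcases eq_or_ne b 0 with rfl | hb
  · exact ⟨0, 1, by simp, by simp⟩
  set d := gcd a b
  have hd : d ≠ 0 := gcd_ne_zero_of_right hb
  obtain ⟨u, hu⟩ : d ∣ a := gcd_dvd_left a b
  obtain ⟨v, hv⟩ : d ∣ b := gcd_dvd_right a b
  have hcop : IsCoprime u v := by
    have h : IsCoprime (a / d) (b / d) := isCoprime_div_gcd_div_gcd hb
    rwa [hu, hv, mul_div_cancel_left₀ _ hd, mul_div_cancel_left₀ _ hd] at h
  rw [hu, hv, wronskian_mul_mul, mul_eq_zero, or_iff_right (pow_ne_zero 2 hd),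
    hcop.wronskian_eq_zero_iff] at hw
  obtain ⟨c, rfl⟩ : ∃ c, u = C c := ⟨_, eq_C_of_derivative_eq_zero hw.1⟩
  obtain ⟨e, rfl⟩ : ∃ e, v = C e := ⟨_, eq_C_of_derivative_eq_zero hw.2⟩
  have he : e ≠ 0 := by rintro rfl; exact hb (by rw [hv, C_0, mul_zero])
  refine ⟨e, -c, fun h ↦ he h.1, ?_⟩
  rw [hu, hv, C_neg]
  ring

end Polynomial

namespace MvPolynomial

open scoped Polynomial

variable {R : Type*} [CommRing R]

theorem IsHomogeneous.nsmul_mul_pderiv_sub_eq_neg_X_mul_jacobian {n : ℕ}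
    {f g : MvPolynomial (Fin 2) R} (hf : f.IsHomogeneous n) (hg : g.IsHomogeneous n) :
    n • (f * pderiv 0 g - pderiv 0 f * g) =
      -(X 1 * (pderiv 0 f * pderiv 1 g - pderiv 1 f * pderiv 0 g)) := by
  have ef := hf.sum_X_mul_pderiv
  have eg := hg.sum_X_mul_pderiv
  simp only [Fin.sum_univ_two] at ef eg
  rw [smul_sub, ← smul_mul_assoc, ← mul_smul_comm, ← ef, ← eg]
  ring

noncomputable def dehomogenize : MvPolynomial (Fin 2) R →ₐ[R] R[X] :=
  aeval ![Polynomial.X, 1]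

theorem dehomogenize_pderiv_zero (p : MvPolynomial (Fin 2) R) :
    dehomogenize (pderiv 0 p) = Polynomial.derivative (dehomogenize p) := by
  induction p using MvPolynomial.induction_on with
  | C a => simp [dehomogenize]
  | add p q hp hq => simp only [map_add, hp, hq]
  | mul_X p i hp =>
    unfold dehomogenize at hp ⊢
    fin_cases i
    · simp [hp, Polynomial.derivative_mul, mul_comm]
    · simp [hp]

theorem IsHomogeneous.eq_zero_of_dehomogenize_eq_zero {n : ℕ} {p : MvPolynomial (Fin 2) R}
    (hp : p.IsHomogeneous n) (h : dehomogenize p = 0) : p = 0 := by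
  simpa using (Polynomial.homogenize_eq_of_isHomogeneous hp (p := 0) h).symm

end MvPolynomial

/-- Two homogeneous polynomials of the same degree `k ≥ 1` in two variables
whose Jacobian determinant vanishes identically are linearly dependent. -/
theorem stmt_14 (k : ℕ) (hk : 1 ≤ k) (f g : MvPolynomial (Fin 2) ℝ)
    (hf : f.IsHomogeneous k) (hg : g.IsHomogeneous k)
    (hjac : ∀ x : Fin 2 → ℝ,
      eval x (pderiv 0 f) * eval x (pderiv 1 g) -
        eval x (pderiv 1 f) * eval x (pderiv 0 g) = 0) :
    ∃ a b : ℝ, ¬(a = 0 ∧ b = 0) ∧ C a * f + C b * g = 0 := by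
  have hJ : pderiv 0 f * pderiv 1 g - pderiv 1 f * pderiv 0 g = 0 :=
    MvPolynomial.funext fun x ↦ by simpa using hjac x
  have hW : f * pderiv 0 g - pderiv 0 f * g = 0 := by
    have h := hf.nsmul_mul_pderiv_sub_eq_neg_X_mul_jacobian hg
    rwa [hJ, mul_zero, neg_zero, smul_eq_zero, or_iff_right (by omega)] at h
  have hw : Polynomial.wronskian (dehomogenize f) (dehomogenize g) = 0 := by
    rw [Polynomial.wronskian, ← dehomogenize_pderiv_zero, ← dehomogenize_pderiv_zero, ← map_mul,
      ← map_mul, ← map_sub, hW, map_zero]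
  obtain ⟨a, b, hab, h⟩ := Polynomial.exists_C_mul_add_C_mul_eq_zero_of_wronskian_eq_zero hw
  refine ⟨a, b, hab, ((hf.C_mul a).add (hg.C_mul b)).eq_zero_of_dehomogenize_eq_zero ?_⟩
  simpa [algHom_C, Polynomial.algebraMap_eq] using h
end

section
/- Let H be a positive definite symmetric 2×2 real matrix, set S(x) = (1/2)⟨x, Hx⟩ and P(x) = Hx. Let k ≥ 1 be an integer, ν ∈ ℝ, and let U : ℝ² → ℝ² have components which are homogeneous polynomials of degree k. If ⟨U(x), P(x)⟩ + ν·S(x)·div U(x) = 0 for all x ∈ ℝ², then there exists a homogeneous polynomial σ of degree k − 1 such that U(x) = −(ν/2)·div U(x)·x + σ(x)·((Hx)₂, −(Hx)₁) for all x ∈ ℝ². -/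
/-!
Put `V = U + (ν/2)·(div U)·x`. Since `⟨x, Hx⟩ = 2S`, the hypothesis says `⟨V, Hx⟩ = 0`, i.e.
`V₁ ℓ₀ + V₂ ℓ₁ = 0` for the linear forms `ℓᵢ = (Hx)ᵢ`. As `H` is invertible, every common divisor
of `ℓ₀` and `ℓ₁` divides both `X₀` and `X₁`, so the two forms are relatively prime. Hence
`V₁ = σ ℓ₁` and `V₂ = -σ ℓ₀`, and `σ` is homogeneous of degree `k - 1` because `V₁` is homogeneous
of degree `k` and `ℓ₁` of degree `1`.
-/

open Matrix MvPolynomial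

theorem IsRelPrime.exists_eq_mul_of_mul_add_mul_eq_zero {α : Type*} [CommRing α] [IsDomain α]
    [DecompositionMonoid α] {a b p q : α} (hab : IsRelPrime a b) (hb : b ≠ 0)
    (h : p * a + q * b = 0) : ∃ s, p = s * b ∧ q = -(s * a) := by
  obtain ⟨s, rfl⟩ : b ∣ p :=
    hab.symm.dvd_of_dvd_mul_right ⟨-q, by linear_combination h⟩
  refine ⟨s, mul_comm _ _, mul_right_cancel₀ hb ?_⟩
  linear_combination h

namespace MvPolynomial

variable {σ R : Type*}

section CommSemiring

variable [CommSemiring R]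

attribute [local instance] MvPolynomial.gradedAlgebra in
theorem homogeneousComponent_add_mul_of_isHomogeneous {m : ℕ} {b : MvPolynomial σ R}
    (hb : b.IsHomogeneous m) (n : ℕ) (a : MvPolynomial σ R) :
    homogeneousComponent (n + m) (a * b) = homogeneousComponent n a * b := by
  have := DirectSum.coe_decompose_mul_of_right_mem_of_le (homogeneousSubmodule σ R)
    (a := a) (n := n + m) hb (Nat.le_add_left m n)
  rw [Nat.add_sub_cancel] at this
  rwa [← decomposition.decompose'_apply, ← decomposition.decompose'_apply]

variable [Fintype σ]

noncomputable def linearForm (M : Matrix σ σ R) (i : σ) : MvPolynomial σ R :=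
  ∑ j, C (M i j) * X j

theorem eval_linearForm (M : Matrix σ σ R) (x : σ → R) (i : σ) :
    eval x (linearForm M i) = (M *ᵥ x) i := by
  simp [linearForm, mulVec, dotProduct]

theorem isHomogeneous_linearForm (M : Matrix σ σ R) (i : σ) :
    (linearForm M i).IsHomogeneous 1 :=
  IsHomogeneous.sum _ _ _ fun j _ => isHomogeneous_C_mul_X (M i j) j

theorem linearForm_one [DecidableEq σ] (i : σ) : linearForm (1 : Matrix σ σ R) i = X i := by
  simp [linearForm, one_apply]

theorem linearForm_mul (N M : Matrix σ σ R) (i : σ) :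
    linearForm (N * M) i = ∑ j, C (N i j) * linearForm M j := by
  simp only [linearForm, mul_apply, map_sum, Finset.sum_mul, Finset.mul_sum, C_mul, mul_assoc]
  exact Finset.sum_comm

end CommSemiring

section CommRing

variable [CommRing R]

theorem IsHomogeneous.of_mul_right [IsDomain R] {m n : ℕ} {a b : MvPolynomial σ R}
    (h : (a * b).IsHomogeneous (n + m)) (hb : b.IsHomogeneous m) (hb0 : b ≠ 0) :
    a.IsHomogeneous n := by
  have : homogeneousComponent n a = a := by
    apply mul_right_cancel₀ hb0
    rw [← homogeneousComponent_add_mul_of_isHomogeneous hb, homogeneousComponent_eq_self h]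
  exact this ▸ homogeneousComponent_isHomogeneous n a

theorem isRelPrime_X_X [IsDomain R] {i j : σ} (hij : i ≠ j) :
    IsRelPrime (X i : MvPolynomial σ R) (X j) :=
  X_prime.irreducible.isRelPrime_iff_not_dvd.mpr (X_dvd_X.not.mpr hij)

variable [Fintype σ] [DecidableEq σ] {M : Matrix σ σ R}

theorem linearForm_ne_zero [Nontrivial R] (hM : IsUnit M.det) (i : σ) :
    linearForm M i ≠ 0 := by
  intro h
  have := congrArg (eval (M⁻¹ *ᵥ Pi.single i 1)) h
  rw [eval_linearForm, mulVec_mulVec, mul_nonsing_inv M hM, one_mulVec] at this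
  simp at this

theorem dvd_X_of_forall_dvd_linearForm (hM : IsUnit M.det) {d : MvPolynomial σ R}
    (hd : ∀ i, d ∣ linearForm M i) (j : σ) : d ∣ X j := by
  rw [← linearForm_one, ← nonsing_inv_mul M hM, linearForm_mul]
  exact Finset.dvd_sum fun i _ => (hd i).mul_left _

theorem isRelPrime_linearForm [IsDomain R] {M : Matrix (Fin 2) (Fin 2) R} (hM : IsUnit M.det) :
    IsRelPrime (linearForm M 0) (linearForm M 1) := by
  intro d h₀ h₁
  have hd : ∀ i, d ∣ linearForm M i := Fin.forall_fin_two.mpr ⟨h₀, h₁⟩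
  exact isRelPrime_X_X (R := R) zero_ne_one (dvd_X_of_forall_dvd_linearForm hM hd 0)
    (dvd_X_of_forall_dvd_linearForm hM hd 1)

end CommRing

end MvPolynomial

/-- With `S(x) = ½⟨x, Hx⟩`, `P(x) = Hx`, `H` positive definite symmetric:
if the components of `U` are homogeneous polynomials of degree `k ≥ 1` and
`⟨U, P⟩ + ν·S·div U = 0`, then `U(x) = −(ν/2)·div U(x)·x + σ(x)·T(Hx)` for a
homogeneous polynomial `σ` of degree `k − 1`, where `T(Hx) = ((Hx)₂, −(Hx)₁)`. -/
theorem stmt_15 (H : Matrix (Fin 2) (Fin 2) ℝ) (hH : H.PosDef)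
    (k : ℕ) (hk : 1 ≤ k) (ν : ℝ) (U₁ U₂ : MvPolynomial (Fin 2) ℝ)
    (hU₁ : U₁.IsHomogeneous k) (hU₂ : U₂.IsHomogeneous k)
    (heq : ∀ x : Fin 2 → ℝ,
      eval x U₁ * H.mulVec x 0 + eval x U₂ * H.mulVec x 1 +
        ν * ((1 / 2) * (x ⬝ᵥ H.mulVec x)) *
          (eval x (pderiv 0 U₁) + eval x (pderiv 1 U₂)) = 0) :
    ∃ σ : MvPolynomial (Fin 2) ℝ, σ.IsHomogeneous (k - 1) ∧
      ∀ x : Fin 2 → ℝ,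
        eval x U₁ = -(ν / 2) * (eval x (pderiv 0 U₁) + eval x (pderiv 1 U₂)) * x 0 +
            eval x σ * H.mulVec x 1 ∧
        eval x U₂ = -(ν / 2) * (eval x (pderiv 0 U₁) + eval x (pderiv 1 U₂)) * x 1 +
            eval x σ * (-(H.mulVec x 0)) := by
  have hdet : IsUnit H.det := hH.det_pos.ne'.isUnit
  set D := pderiv 0 U₁ + pderiv 1 U₂
  set V₁ := U₁ + C (ν / 2) * D * X 0
  set V₂ := U₂ + C (ν / 2) * D * X 1
  have hV : V₁ * linearForm H 0 + V₂ * linearForm H 1 = 0 := by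
    refine MvPolynomial.funext fun x => ?_
    simp only [V₁, V₂, D, eval_add, eval_mul, eval_C, eval_X, eval_linearForm, map_zero]
    simp only [dotProduct, Fin.sum_univ_two] at heq
    linear_combination heq x
  obtain ⟨σ, hσ₁, hσ₂⟩ :=
    (isRelPrime_linearForm hdet).exists_eq_mul_of_mul_add_mul_eq_zero
      (linearForm_ne_zero hdet 1) hV
  have hD : D.IsHomogeneous (k - 1) := hU₁.pderiv.add hU₂.pderiv
  have hV₁ : V₁.IsHomogeneous (k - 1 + 1) :=
    (Nat.sub_add_cancel hk ▸ hU₁).add ((hD.C_mul _).mul (isHomogeneous_X _ _))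
  refine ⟨σ, (hσ₁ ▸ hV₁).of_mul_right (isHomogeneous_linearForm H 1) (linearForm_ne_zero hdet 1),
    fun x => ⟨?_, ?_⟩⟩
  · have := congrArg (eval x) hσ₁
    simp only [V₁, D, eval_add, eval_mul, eval_C, eval_X, eval_linearForm] at this
    linear_combination this
  · have := congrArg (eval x) hσ₂
    simp only [V₂, D, eval_add, eval_mul, eval_C, eval_X, eval_neg, eval_linearForm] at this
    linear_combination this
end

section
/- Let ε > 0 and let A, B, C, D, E : ℝ² → ℝ be smooth functions. Suppose that for all y ∈ ℝ² with 0 < |y|² < ε, writing τ = |y|² and F(τ) = τ·log τ (so F′(τ) = log τ + 1), one has F′(τ)·A(y) + F(τ)·B(y) + F(τ)·F′(τ)·C(y) + F(τ)²·D(y) + E(y) = 0. Then the three smooth functions y ↦ A(y) + |y|²·B(y) + |y|²·C(y), y ↦ C(y) + |y|²·D(y), and y ↦ A(y) + E(y) are all flat at 0 (all their iterated derivatives vanish at the origin). -/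
open Filter Topology Asymptotics

-- F-facts
lemma aux_mul_log_pow (n : ℕ) :
    Tendsto (fun t : ℝ => t * (Real.log t) ^ n) (𝓝[>] (0:ℝ)) (𝓝 0) := by
  have h1 : Tendsto (fun t : ℝ => -Real.log t) (𝓝[>] (0:ℝ)) atTop :=
    tendsto_neg_atBot_atTop.comp Real.tendsto_log_nhdsGT_zero
  have h2 := (Real.tendsto_pow_mul_exp_neg_atTop_nhds_zero n).comp h1
  have h3 : Tendsto (fun t : ℝ => (-1:ℝ)^n * ((-Real.log t) ^ n * Real.exp (-(-Real.log t))))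
      (𝓝[>] (0:ℝ)) (𝓝 ((-1:ℝ)^n * 0)) := tendsto_const_nhds.mul h2
  rw [mul_zero] at h3
  apply h3.congr'
  filter_upwards [self_mem_nhdsWithin] with t ht
  have : Real.exp (-(-Real.log t)) = t := by rw [neg_neg, Real.exp_log ht]
  rw [this]
  have h5 : (-Real.log t)^n = (-1:ℝ)^n * (Real.log t)^n := neg_pow _ _
  rw [h5]
  have h4 : ((-1:ℝ)^n)*((-1:ℝ)^n) = 1 := by
    rw [← pow_add]; exact Even.neg_one_pow ⟨n, by ring⟩
  calc (-1:ℝ) ^ n * ((-1) ^ n * Real.log t ^ n * t)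
      = ((-1:ℝ)^n * (-1:ℝ)^n) * (Real.log t ^ n * t) := by ring
    _ = t * Real.log t ^ n := by rw [h4]; ring

lemma aux_L_neg : ∀ᶠ t in 𝓝[>] (0:ℝ), Real.log (t^2) < 0 := by
  filter_upwards [Ioo_mem_nhdsGT (by norm_num : (0:ℝ) < 1)] with t ht
  exact Real.log_neg (by nlinarith [ht.1]) (by nlinarith [ht.1, ht.2])

lemma aux_L_atBot : Tendsto (fun t : ℝ => Real.log (t^2)) (𝓝[>] (0:ℝ)) atBot := by
  have h : Tendsto (fun t : ℝ => (2:ℝ) * Real.log t) (𝓝[>] (0:ℝ)) atBot :=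
    Real.tendsto_log_nhdsGT_zero.const_mul_atBot (by norm_num)
  apply h.congr
  intro t
  rw [Real.log_pow]
  norm_num

lemma aux_invL : Tendsto (fun t : ℝ => (Real.log (t^2))⁻¹) (𝓝[>] (0:ℝ)) (𝓝 0) := by
  have h : Tendsto (fun t : ℝ => -Real.log (t^2)) (𝓝[>] (0:ℝ)) atTop :=
    tendsto_neg_atBot_atTop.comp aux_L_atBot
  have h2 := h.inv_tendsto_atTop
  have h3 : Tendsto (fun t : ℝ => -(-Real.log (t^2))⁻¹) (𝓝[>] (0:ℝ)) (𝓝 (-0)) := h2.neg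
  rw [neg_zero] at h3
  apply h3.congr
  intro t
  rw [inv_neg, neg_neg]

lemma aux_tL : Tendsto (fun t : ℝ => t * Real.log (t^2)) (𝓝[>] (0:ℝ)) (𝓝 0) := by
  have := (aux_mul_log_pow 1).const_mul (2:ℝ)
  rw [mul_zero] at this
  apply this.congr
  intro t
  rw [Real.log_pow]
  push_cast
  ring

lemma aux_tL2 : Tendsto (fun t : ℝ => t * (Real.log (t^2))^2) (𝓝[>] (0:ℝ)) (𝓝 0) := by
  have := (aux_mul_log_pow 2).const_mul (4:ℝ)
  rw [mul_zero] at this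
  apply this.congr
  intro t
  rw [Real.log_pow]
  push_cast
  ring


noncomputable def tc (q : ℝ → ℝ) (j : ℕ) : ℝ := iteratedDeriv j q 0 / (Nat.factorial j : ℝ)

lemma coeff_tendsto {q : ℝ → ℝ} (hq : ContDiff ℝ (⊤ : ℕ∞) q) (i : ℕ) (hv : ∀ j < i, tc q j = 0) :
    Tendsto (fun t => q t / t ^ i) (𝓝[>] (0:ℝ)) (𝓝 (tc q i)) := by
  have hT := taylor_isLittleO_univ (x₀ := (0:ℝ)) (n := i) (hq.of_le (by exact_mod_cast le_top))
  have hsum : ∀ x : ℝ, taylorWithinEval q i Set.univ 0 x = tc q i * x ^ i := by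
    intro x
    rw [taylor_within_apply, Finset.sum_eq_single i]
    · rw [iteratedDerivWithin_univ, smul_eq_mul, tc, sub_zero]; ring
    · intro j hj hji
      have hji' : j < i := by have := Finset.mem_range.1 hj; omega
      have h := hv j hji'
      rw [tc, div_eq_zero_iff] at h
      have h' : iteratedDeriv j q 0 = 0 := h.resolve_right (by positivity)
      rw [iteratedDerivWithin_univ, h', smul_zero]
    · exact fun h => absurd (Finset.self_mem_range_succ i) h
  have h1 := hT.tendsto_div_nhds_zero
  have h2 : Tendsto (fun t : ℝ => (q t - taylorWithinEval q i Set.univ 0 t) / (t - 0) ^ i)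
      (𝓝[>] (0:ℝ)) (𝓝 0) := h1.mono_left nhdsWithin_le_nhds
  have h3 := h2.add (tendsto_const_nhds (x := tc q i))
  rw [zero_add] at h3
  apply h3.congr'
  filter_upwards [self_mem_nhdsWithin] with t ht
  have ht0 : (t:ℝ) ^ i ≠ 0 := pow_ne_zero _ (ne_of_gt ht)
  rw [hsum, sub_zero, sub_div, mul_div_assoc, div_self ht0]
  ring

lemma killQR {g q r : ℝ → ℝ} (hq : ContDiff ℝ (⊤ : ℕ∞) q) (hr : ContDiff ℝ (⊤ : ℕ∞) r)
    {δ : ℝ} (hδ : 0 < δ)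
    (hid : ∀ t : ℝ, 0 < t → t < δ →
      t^2 * g t * (Real.log (t^2))^2 + q t * Real.log (t^2) + r t = 0)
    (k : ℕ) (hqv : ∀ j < k, tc q j = 0) (hrv : ∀ j < k, tc r j = 0)
    (hg1 : Tendsto (fun t => t^2 * g t * (Real.log (t^2))^2 / (t^k * Real.log (t^2)))
      (𝓝[>] (0:ℝ)) (𝓝 0))
    (hg2 : Tendsto (fun t => t^2 * g t * (Real.log (t^2))^2 / t^k) (𝓝[>] (0:ℝ)) (𝓝 0)) :
    tc q k = 0 ∧ tc r k = 0 := by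
  have hev : ∀ᶠ t in 𝓝[>] (0:ℝ), ((0 < t ∧ t < δ) ∧ Real.log (t^2) < 0) := by
    filter_upwards [Ioo_mem_nhdsGT hδ, aux_L_neg] with t h1 h2
    exact ⟨⟨h1.1, h1.2⟩, h2⟩
  have ha : tc q k = 0 := by
    have hten : Tendsto (fun t => t^2 * g t * (Real.log (t^2))^2 / (t^k * Real.log (t^2))
        + q t / t^k + (r t / t^k) * (Real.log (t^2))⁻¹) (𝓝[>] (0:ℝ))
        (𝓝 (0 + tc q k + tc r k * 0)) :=
      (hg1.add (coeff_tendsto hq k hqv)).add ((coeff_tendsto hr k hrv).mul aux_invL)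
    rw [mul_zero, zero_add, add_zero] at hten
    have h0 : Tendsto (fun t => t^2 * g t * (Real.log (t^2))^2 / (t^k * Real.log (t^2))
        + q t / t^k + (r t / t^k) * (Real.log (t^2))⁻¹) (𝓝[>] (0:ℝ)) (𝓝 0) := by
      apply Tendsto.congr' ?_ (tendsto_const_nhds (x := (0:ℝ)))
      filter_upwards [hev] with t h
      have ht0 : t ≠ 0 := ne_of_gt h.1.1
      have hL0 : Real.log (t^2) ≠ 0 := ne_of_lt h.2
      have e2 : q t / t^k = q t * Real.log (t^2) / (t^k * Real.log (t^2)) :=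
        (mul_div_mul_right _ _ hL0).symm
      have e3 : (r t / t^k) * (Real.log (t^2))⁻¹ = r t / (t^k * Real.log (t^2)) := by
        rw [← div_eq_mul_inv, div_div]
      rw [e2, e3, ← add_div, ← add_div, hid t h.1.1 h.1.2, zero_div]
    exact tendsto_nhds_unique hten h0
  refine ⟨ha, ?_⟩
  have hqv' : ∀ j < k + 1, tc q j = 0 := by
    intro j hj
    rcases Nat.lt_succ_iff_lt_or_eq.1 hj with h | h
    · exact hqv j h
    · rw [h]; exact ha
  have hten : Tendsto (fun t => t^2 * g t * (Real.log (t^2))^2 / t^k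
      + (q t / t^(k+1)) * (t * Real.log (t^2)) + r t / t^k) (𝓝[>] (0:ℝ))
      (𝓝 (0 + tc q (k+1) * 0 + tc r k)) :=
    (hg2.add ((coeff_tendsto hq (k+1) hqv').mul aux_tL)).add (coeff_tendsto hr k hrv)
  rw [mul_zero, add_zero, zero_add] at hten
  have h0 : Tendsto (fun t => t^2 * g t * (Real.log (t^2))^2 / t^k
      + (q t / t^(k+1)) * (t * Real.log (t^2)) + r t / t^k) (𝓝[>] (0:ℝ)) (𝓝 0) := by
    apply Tendsto.congr' ?_ (tendsto_const_nhds (x := (0:ℝ)))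
    filter_upwards [hev] with t h
    have ht0 : t ≠ 0 := ne_of_gt h.1.1
    have e2 : (q t / t^(k+1)) * (t * Real.log (t^2)) = q t * Real.log (t^2) / t^k := by
      rw [div_mul_eq_mul_div, pow_succ t k,
        show q t * (t * Real.log (t^2)) = (q t * Real.log (t^2)) * t by ring,
        mul_div_mul_right _ _ ht0]
    rw [e2, ← add_div, ← add_div, hid t h.1.1 h.1.2, zero_div]
  exact tendsto_nhds_unique hten h0

lemma killG {g q r : ℝ → ℝ} (hg : ContDiff ℝ (⊤ : ℕ∞) g)
    (hq : ContDiff ℝ (⊤ : ℕ∞) q) (hr : ContDiff ℝ (⊤ : ℕ∞) r)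
    {δ : ℝ} (hδ : 0 < δ)
    (hid : ∀ t : ℝ, 0 < t → t < δ →
      t^2 * g t * (Real.log (t^2))^2 + q t * Real.log (t^2) + r t = 0)
    (i : ℕ) (hqv : ∀ j < i + 2, tc q j = 0) (hrv : ∀ j < i + 2, tc r j = 0)
    (hgv : ∀ j < i, tc g j = 0) :
    tc g i = 0 := by
  have hev : ∀ᶠ t in 𝓝[>] (0:ℝ), ((0 < t ∧ t < δ) ∧ Real.log (t^2) < 0) := by
    filter_upwards [Ioo_mem_nhdsGT hδ, aux_L_neg] with t h1 h2
    exact ⟨⟨h1.1, h1.2⟩, h2⟩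
  have hterm1 : Tendsto (fun t => t^2 * g t * (Real.log (t^2))^2
      / (t^(i+2) * (Real.log (t^2))^2)) (𝓝[>] (0:ℝ)) (𝓝 (tc g i)) := by
    apply Tendsto.congr' ?_ (coeff_tendsto hg i hgv)
    filter_upwards [hev] with t h
    have ht0 : t ≠ 0 := ne_of_gt h.1.1
    have hL0 : Real.log (t^2) ≠ 0 := ne_of_lt h.2
    have hc : t^2 * (Real.log (t^2))^2 ≠ 0 := by positivity
    rw [show t^(i+2) * (Real.log (t^2))^2 = t^i * (t^2 * (Real.log (t^2))^2) by ring,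
      show t^2 * g t * (Real.log (t^2))^2 = g t * (t^2 * (Real.log (t^2))^2) by ring,
      mul_div_mul_right _ _ hc]
  have hten : Tendsto (fun t => t^2 * g t * (Real.log (t^2))^2 / (t^(i+2) * (Real.log (t^2))^2)
      + (q t / t^(i+2)) * (Real.log (t^2))⁻¹
      + (r t / t^(i+2)) * ((Real.log (t^2))⁻¹ * (Real.log (t^2))⁻¹)) (𝓝[>] (0:ℝ))
      (𝓝 (tc g i + tc q (i+2) * 0 + tc r (i+2) * (0 * 0))) :=
    (hterm1.add ((coeff_tendsto hq (i+2) hqv).mul aux_invL)).add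
      ((coeff_tendsto hr (i+2) hrv).mul (aux_invL.mul aux_invL))
  rw [mul_zero, zero_mul, mul_zero, add_zero, add_zero] at hten
  have h0 : Tendsto (fun t => t^2 * g t * (Real.log (t^2))^2 / (t^(i+2) * (Real.log (t^2))^2)
      + (q t / t^(i+2)) * (Real.log (t^2))⁻¹
      + (r t / t^(i+2)) * ((Real.log (t^2))⁻¹ * (Real.log (t^2))⁻¹)) (𝓝[>] (0:ℝ)) (𝓝 0) := by
    apply Tendsto.congr' ?_ (tendsto_const_nhds (x := (0:ℝ)))
    filter_upwards [hev] with t h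
    have ht0 : t ≠ 0 := ne_of_gt h.1.1
    have hL0 : Real.log (t^2) ≠ 0 := ne_of_lt h.2
    have e2 : (q t / t^(i+2)) * (Real.log (t^2))⁻¹
        = q t * Real.log (t^2) / (t^(i+2) * (Real.log (t^2))^2) := by
      rw [← div_eq_mul_inv, div_div,
        show t^(i+2) * (Real.log (t^2))^2
          = (t^(i+2) * Real.log (t^2)) * Real.log (t^2) by ring,
        mul_div_mul_right _ _ hL0]
    have e3 : (r t / t^(i+2)) * ((Real.log (t^2))⁻¹ * (Real.log (t^2))⁻¹)
        = r t / (t^(i+2) * (Real.log (t^2))^2) := by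
      rw [← mul_assoc, ← div_eq_mul_inv, ← div_eq_mul_inv, div_div, div_div,
        show t^(i+2) * (Real.log (t^2) * Real.log (t^2))
          = t^(i+2) * (Real.log (t^2))^2 by ring]
    rw [e2, e3, ← add_div, ← add_div, hid t h.1.1 h.1.2, zero_div]
  exact tendsto_nhds_unique hten h0

lemma ray_vanish {g q r : ℝ → ℝ} (hg : ContDiff ℝ (⊤ : ℕ∞) g) (hq : ContDiff ℝ (⊤ : ℕ∞) q)
    (hr : ContDiff ℝ (⊤ : ℕ∞) r) {δ : ℝ} (hδ : 0 < δ)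
    (hid : ∀ t : ℝ, 0 < t → t < δ →
      t^2 * g t * (Real.log (t^2))^2 + q t * Real.log (t^2) + r t = 0) :
    (∀ i, tc q i = 0) ∧ (∀ i, tc r i = 0) ∧ (∀ i, tc g i = 0) := by
  have tid : Tendsto (fun t : ℝ => t) (𝓝[>] (0:ℝ)) (𝓝 0) :=
    (continuous_id.tendsto 0).mono_left nhdsWithin_le_nhds
  have hLne : ∀ᶠ t in 𝓝[>] (0:ℝ), (0 < t ∧ Real.log (t^2) < 0) := by
    filter_upwards [self_mem_nhdsWithin, aux_L_neg] with t h1 h2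
    exact ⟨h1, h2⟩
  have main : ∀ i, (∀ j ≤ i, tc q j = 0 ∧ tc r j = 0) ∧ (∀ j < i, tc g j = 0) := by
    intro i
    induction i with
    | zero =>
      have hno : ∀ j < 0, tc g j = 0 := fun j hj => absurd hj (Nat.not_lt_zero j)
      have hg1 : Tendsto (fun t => t^2 * g t * (Real.log (t^2))^2 / (t^0 * Real.log (t^2)))
          (𝓝[>] (0:ℝ)) (𝓝 0) := by
        have h1 := (coeff_tendsto hg 0 hno).mul (tid.mul aux_tL)
        rw [mul_zero, mul_zero] at h1
        apply Tendsto.congr' ?_ h1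
        filter_upwards [hLne] with t ht
        have ht0 : t ≠ 0 := ne_of_gt ht.1
        have hL0 : Real.log (t^2) ≠ 0 := ne_of_lt ht.2
        rw [pow_zero, div_one, one_mul, eq_div_iff hL0]
        ring
      have hg2 : Tendsto (fun t => t^2 * g t * (Real.log (t^2))^2 / t^0)
          (𝓝[>] (0:ℝ)) (𝓝 0) := by
        have h1 := (coeff_tendsto hg 0 hno).mul (aux_tL.mul aux_tL)
        rw [mul_zero, mul_zero] at h1
        apply Tendsto.congr' ?_ h1
        filter_upwards [hLne] with t ht
        rw [pow_zero, div_one, div_one]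
        ring
      have h := killQR hq hr hδ hid 0 (fun j hj => absurd hj (Nat.not_lt_zero j))
        (fun j hj => absurd hj (Nat.not_lt_zero j)) hg1 hg2
      exact ⟨fun j hj => by rw [Nat.le_zero.mp hj]; exact h, hno⟩
    | succ i ih =>
      have hqv : ∀ j < i + 1, tc q j = 0 := fun j hj => (ih.1 j (Nat.lt_succ_iff.mp hj)).1
      have hrv : ∀ j < i + 1, tc r j = 0 := fun j hj => (ih.1 j (Nat.lt_succ_iff.mp hj)).2
      have hgv : ∀ j < i, tc g j = 0 := ih.2
      have hg1 : Tendsto (fun t => t^2 * g t * (Real.log (t^2))^2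
          / (t^(i+1) * Real.log (t^2))) (𝓝[>] (0:ℝ)) (𝓝 0) := by
        have h1 := (coeff_tendsto hg i hgv).mul aux_tL
        rw [mul_zero] at h1
        apply Tendsto.congr' ?_ h1
        filter_upwards [hLne] with t ht
        have ht0 : t ≠ 0 := ne_of_gt ht.1
        have hL0 : Real.log (t^2) ≠ 0 := ne_of_lt ht.2
        rw [div_mul_eq_mul_div, div_eq_div_iff (pow_ne_zero _ ht0)
          (mul_ne_zero (pow_ne_zero _ ht0) hL0), pow_succ t i]
        ring
      have hg2 : Tendsto (fun t => t^2 * g t * (Real.log (t^2))^2 / t^(i+1))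
          (𝓝[>] (0:ℝ)) (𝓝 0) := by
        have h1 := (coeff_tendsto hg i hgv).mul aux_tL2
        rw [mul_zero] at h1
        apply Tendsto.congr' ?_ h1
        filter_upwards [hLne] with t ht
        have ht0 : t ≠ 0 := ne_of_gt ht.1
        rw [div_mul_eq_mul_div, div_eq_div_iff (pow_ne_zero _ ht0) (pow_ne_zero _ ht0),
          pow_succ t i]
        ring
      have h := killQR hq hr hδ hid (i+1) hqv hrv hg1 hg2
      have hqv2 : ∀ j < i + 2, tc q j = 0 := by
        intro j hj
        rcases Nat.lt_succ_iff_lt_or_eq.mp hj with h' | h'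
        · exact hqv j h'
        · rw [h']; exact h.1
      have hrv2 : ∀ j < i + 2, tc r j = 0 := by
        intro j hj
        rcases Nat.lt_succ_iff_lt_or_eq.mp hj with h' | h'
        · exact hrv j h'
        · rw [h']; exact h.2
      have hgi := killG hg hq hr hδ hid i hqv2 hrv2 hgv
      refine ⟨fun j hj => ?_, fun j hj => ?_⟩
      · rcases Nat.lt_succ_iff_lt_or_eq.mp (Nat.lt_succ_of_le hj) with h' | h'
        · exact ih.1 j (Nat.lt_succ_iff.mp h')
        · rw [h']; exact h
      · rcases Nat.lt_succ_iff_lt_or_eq.mp hj with h' | h'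
        · exact hgv j h'
        · rw [h']; exact hgi
  exact ⟨fun i => ((main i).1 i le_rfl).1, fun i => ((main i).1 i le_rfl).2,
    fun i => (main (i+1)).2 i (Nat.lt_succ_self i)⟩

lemma line_iter {f : ℝ × ℝ → ℝ} (hf : ContDiff ℝ (⊤ : ℕ∞) f) (u : ℝ × ℝ) (k : ℕ) (s : ℝ) :
    iteratedDeriv k (fun t : ℝ => f (t • u)) s = iteratedFDeriv ℝ k f (s • u) (fun _ => u) := by
  have hL : (fun t : ℝ => f (t • u)) = f ∘ ((ContinuousLinearMap.id ℝ ℝ).smulRight u) := by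
    funext t; simp
  rw [iteratedDeriv_eq_iteratedFDeriv, hL,
    ContinuousLinearMap.iteratedFDeriv_comp_right _ hf _ (by exact_mod_cast le_top)]
  simp

lemma bound1d : ∀ (k : ℕ) (g : ℝ → ℝ), ContDiff ℝ (⊤ : ℕ∞) g → ∀ C : ℝ,
    (∀ j < k, iteratedDeriv j g 0 = 0) → (∀ s ∈ Set.Icc (0:ℝ) 1, |iteratedDeriv k g s| ≤ C) →
    ∀ t ∈ Set.Icc (0:ℝ) 1, |g t| ≤ C * t ^ k := by
  intro k
  induction k with
  | zero =>
    intro g _ C _ hC t ht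
    simpa using hC t ht
  | succ k ih =>
    intro g hg C h0 hC t ht
    have hdg : ContDiff ℝ (⊤ : ℕ∞) (deriv g) := (contDiff_infty_iff_deriv.1 hg).2
    have hgd : Differentiable ℝ g := (contDiff_infty_iff_deriv.1 hg).1
    have hd : ∀ s ∈ Set.Icc (0:ℝ) 1, |deriv g s| ≤ C * s ^ k := by
      apply ih (deriv g) hdg C
      · intro j hj
        have := h0 (j+1) (by omega)
        rwa [iteratedDeriv_succ'] at this
      · intro s hs
        have := hC s hs
        rwa [iteratedDeriv_succ'] at this
    have hg0 : g 0 = 0 := by have := h0 0 (by omega); simpa using this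
    have hCnn : 0 ≤ C := le_trans (abs_nonneg _) (hC 0 ⟨le_refl _, zero_le_one⟩)
    have hmv := norm_image_sub_le_of_norm_deriv_le_segment' (f := g) (f' := deriv g)
      (a := 0) (b := t) (C := C * t ^ k)
      (fun x _ => (hgd x).hasDerivAt.hasDerivWithinAt)
      (fun x hx => by
        rw [Real.norm_eq_abs]
        have hx1 : x ∈ Set.Icc (0:ℝ) 1 := ⟨hx.1, le_trans hx.2.le ht.2⟩
        calc |deriv g x| ≤ C * x ^ k := hd x hx1
          _ ≤ C * t ^ k := mul_le_mul_of_nonneg_left (pow_le_pow_left₀ hx.1 hx.2.le k) hCnn)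
      t ⟨ht.1, le_refl t⟩
    rw [hg0, sub_zero, sub_zero, Real.norm_eq_abs] at hmv
    calc |g t| ≤ C * t ^ k * t := hmv
      _ = C * t ^ (k+1) := by ring

lemma flat_of_rays {f : ℝ × ℝ → ℝ} (hf : ContDiff ℝ (⊤ : ℕ∞) f)
    (hray : ∀ u : ℝ × ℝ, u.1^2 + u.2^2 = 1 → ∀ j, iteratedDeriv j (fun t : ℝ => f (t • u)) 0 = 0) :
    ∀ k : ℕ, f =O[𝓝 0] fun y => ‖y‖ ^ (k+1) := by
  intro k
  obtain ⟨B, hB⟩ := (isCompact_closedBall (0 : ℝ × ℝ) 1).exists_bound_of_continuousOn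
    ((hf.continuous_iteratedFDeriv (m := k+1) (by exact_mod_cast le_top)).continuousOn)
  have hu1 : ∀ u : ℝ × ℝ, u.1^2 + u.2^2 = 1 → ‖u‖ ≤ 1 := by
    intro u hu
    rw [Prod.norm_def, max_le_iff]
    constructor <;> rw [Real.norm_eq_abs, abs_le] <;> constructor <;>
      nlinarith [sq_nonneg u.1, sq_nonneg u.2, sq_nonneg (u.1 - 1), sq_nonneg (u.1 + 1),
        sq_nonneg (u.2 - 1), sq_nonneg (u.2 + 1)]
  have hbd : ∀ u : ℝ × ℝ, u.1^2 + u.2^2 = 1 → ∀ t ∈ Set.Icc (0:ℝ) 1,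
      |f (t • u)| ≤ B * t ^ (k+1) := by
    intro u hu
    apply bound1d (k+1) (fun t : ℝ => f (t • u)) (hf.comp (contDiff_id.smul contDiff_const)) B
    · intro j _; exact hray u hu j
    · intro s hs
      rw [line_iter hf u, ← Real.norm_eq_abs]
      have hsu : s • u ∈ Metric.closedBall (0 : ℝ × ℝ) 1 := by
        rw [Metric.mem_closedBall, dist_zero_right, norm_smul, Real.norm_eq_abs,
          abs_of_nonneg hs.1]
        nlinarith [hu1 u hu, hs.2, norm_nonneg u, hs.1]
      calc ‖iteratedFDeriv ℝ (k+1) f (s • u) (fun _ => u)‖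
          ≤ ‖iteratedFDeriv ℝ (k+1) f (s • u)‖ * ∏ _i : Fin (k+1), ‖u‖ :=
            ContinuousMultilinearMap.le_opNorm _ _
        _ ≤ B * 1 := by
            apply mul_le_mul (hB _ hsu) _ (by positivity) (le_trans (norm_nonneg _) (hB _ hsu))
            rw [Finset.prod_const]
            exact pow_le_one₀ (norm_nonneg _) (hu1 u hu)
        _ = B := mul_one B
  have hB0 : 0 ≤ B := le_trans (norm_nonneg _) (hB 0 (Metric.mem_closedBall_self zero_le_one))
  rw [Asymptotics.isBigO_iff]
  refine ⟨B * 2 ^ (k+1), ?_⟩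
  filter_upwards [Metric.ball_mem_nhds (0 : ℝ × ℝ) (by norm_num : (0:ℝ) < 1/2)] with y hy
  rw [Metric.mem_ball, dist_zero_right] at hy
  set r := Real.sqrt (y.1^2 + y.2^2) with hr
  have hr0 : 0 ≤ r := Real.sqrt_nonneg _
  have hry : r ≤ 2 * ‖y‖ := by
    have h1 := norm_fst_le y
    have h2 := norm_snd_le y
    rw [Real.norm_eq_abs] at h1 h2
    calc r ≤ Real.sqrt ((2 * ‖y‖)^2) := Real.sqrt_le_sqrt (by
            nlinarith [abs_nonneg y.1, abs_nonneg y.2, sq_abs y.1, sq_abs y.2, norm_nonneg y])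
      _ = 2 * ‖y‖ := Real.sqrt_sq (by positivity)
  obtain ⟨u, hu, hyu⟩ : ∃ u : ℝ × ℝ, u.1^2 + u.2^2 = 1 ∧ y = r • u := by
    by_cases hr' : r = 0
    · refine ⟨(1, 0), by norm_num, ?_⟩
      have hsq : y.1^2 + y.2^2 = 0 := by
        have := Real.sq_sqrt (by positivity : (0:ℝ) ≤ y.1^2 + y.2^2)
        rw [← hr, hr'] at this; linarith
      have h1 : y.1 = 0 := by nlinarith [sq_nonneg y.1, sq_nonneg y.2]
      have h2 : y.2 = 0 := by nlinarith [sq_nonneg y.1, sq_nonneg y.2]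
      rw [hr', zero_smul, Prod.ext_iff]; exact ⟨h1, h2⟩
    · have hs0 : 0 < r := lt_of_le_of_ne hr0 (Ne.symm hr')
      have hssq : r^2 = y.1^2 + y.2^2 := Real.sq_sqrt (by positivity)
      refine ⟨r⁻¹ • y, ?_, ?_⟩
      · have h1 : (r⁻¹ • y).1 = r⁻¹ * y.1 := rfl
        have h2 : (r⁻¹ • y).2 = r⁻¹ * y.2 := rfl
        rw [h1, h2]
        field_simp
        linarith [hssq]
      · rw [smul_smul, mul_inv_cancel₀ hr', one_smul]
  have hr1 : r ∈ Set.Icc (0:ℝ) 1 := ⟨hr0, by linarith⟩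
  have := hbd u hu r hr1
  rw [← hyu] at this
  rw [Real.norm_eq_abs, norm_pow, norm_norm]
  calc |f y| ≤ B * r^(k+1) := this
    _ ≤ B * (2 * ‖y‖)^(k+1) := by gcongr
    _ = B * 2^(k+1) * ‖y‖^(k+1) := by rw [mul_pow]; ring

lemma flat_fderiv {F : Type} [NormedAddCommGroup F] [NormedSpace ℝ F] {f : ℝ × ℝ → F}
    (hf : ContDiff ℝ (⊤ : ℕ∞) f) (hflat : ∀ k : ℕ, f =O[𝓝 0] fun y => ‖y‖ ^ (k+1)) :
    ∀ k : ℕ, (fun y => fderiv ℝ f y) =O[𝓝 0] fun y => ‖y‖ ^ (k+1) := by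
  intro k
  have h1 : ((⊤ : ℕ∞) : WithTop ℕ∞) ≠ 0 := by simp
  have hdf : ContDiff ℝ (⊤ : ℕ∞) (fderiv ℝ f) := (contDiff_infty_iff_fderiv.1 hf).2
  have hfd : Differentiable ℝ f := (contDiff_infty_iff_fderiv.1 hf).1
  obtain ⟨C2, hC2⟩ := (isCompact_closedBall (0 : ℝ × ℝ) 1).exists_bound_of_continuousOn
    (hdf.continuous_fderiv h1).continuousOn
  have hC2nn : 0 ≤ C2 :=
    le_trans (norm_nonneg _) (hC2 0 (Metric.mem_closedBall_self zero_le_one))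
  have hf0 : f 0 = 0 := by
    obtain ⟨c, hc⟩ := Asymptotics.isBigO_iff.1 (hflat 0)
    have := hc.self_of_nhds
    simpa using this
  have hD0 : fderiv ℝ f 0 = 0 := by
    have hO : f =o[𝓝 0] fun h : ℝ × ℝ => h :=
      (hflat 1).trans_isLittleO (isLittleO_norm_pow_id (by norm_num))
    have hder : HasFDerivAt f (0 : ℝ × ℝ →L[ℝ] F) 0 := by
      rw [hasFDerivAt_iff_isLittleO_nhds_zero]
      simpa [hf0] using hO
    exact hder.fderiv
  obtain ⟨A, hA0, hA⟩ := (hflat (2*k+1)).exists_pos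
  obtain ⟨δ, hδ, hδA⟩ := Metric.eventually_nhds_iff.1 hA.bound
  set K := A * 2^(2*k+1+1) + A + C2 with hK
  have hKnn : 0 ≤ K := add_nonneg (add_nonneg (by positivity) hA0.le) hC2nn
  rw [Asymptotics.isBigO_iff]
  refine ⟨K, ?_⟩
  have hη : 0 < min (δ/2) (1/2) := lt_min (by linarith) (by norm_num)
  filter_upwards [Metric.ball_mem_nhds (0 : ℝ × ℝ) hη] with y hy
  rw [Metric.mem_ball, dist_zero_right, lt_min_iff] at hy
  by_cases hy0 : y = 0
  · rw [hy0, hD0, norm_zero]; positivity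
  have hyp : 0 < ‖y‖ := norm_pos_iff.2 hy0
  set ρ := ‖y‖ ^ (k+1) with hρ
  have hρpos : 0 < ρ := by positivity
  have hρy : ρ ≤ ‖y‖ := pow_le_of_le_one (norm_nonneg _) (by linarith) (by omega)
  have hρ2 : ‖y‖ ^ (2*k+1+1) = ρ^2 := by rw [hρ, ← pow_mul]; ring_nf
  have hy1 : y ∈ Metric.closedBall (0 : ℝ × ℝ) 1 := by
    rw [Metric.mem_closedBall, dist_zero_right]; linarith
  have hkey : ∀ h : ℝ × ℝ, ‖h‖ ≤ ρ → ‖fderiv ℝ f y h‖ ≤ K * ρ^2 := by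
    intro h hh
    have hyh : ‖y + h‖ ≤ 2 * ‖y‖ := by
      have := norm_add_le y h; linarith
    have hyh1 : y + h ∈ Metric.closedBall (0 : ℝ × ℝ) 1 := by
      rw [Metric.mem_closedBall, dist_zero_right]; linarith
    set s := Metric.closedBall y ‖h‖ ∩ Metric.closedBall (0 : ℝ × ℝ) 1 with hs
    have hsc : Convex ℝ s := (convex_closedBall _ _).inter (convex_closedBall _ _)
    have hys : y ∈ s := ⟨Metric.mem_closedBall_self (norm_nonneg _), hy1⟩
    have hyhs : y + h ∈ s := ⟨by rw [Metric.mem_closedBall, dist_eq_norm, add_sub_cancel_left],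
      hyh1⟩
    have hg : ∀ z ∈ s, HasFDerivWithinAt (fun z => f z - fderiv ℝ f y z)
        (fderiv ℝ f z - fderiv ℝ f y) s z := fun z _ =>
      ((hfd z).hasFDerivAt.sub (fderiv ℝ f y).hasFDerivAt).hasFDerivWithinAt
    have hb : ∀ z ∈ s, ‖fderiv ℝ f z - fderiv ℝ f y‖ ≤ C2 * ‖h‖ := by
      intro z hz
      have hm := (convex_closedBall (0 : ℝ × ℝ) 1).norm_image_sub_le_of_norm_fderiv_le
        (fun x _ => hdf.differentiable h1 x) (fun x hx => hC2 x hx) hy1 hz.2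
      have hz1 : ‖z - y‖ ≤ ‖h‖ := by
        have := hz.1; rwa [Metric.mem_closedBall, dist_eq_norm] at this
      calc ‖fderiv ℝ f z - fderiv ℝ f y‖ ≤ C2 * ‖z - y‖ := hm
        _ ≤ C2 * ‖h‖ := mul_le_mul_of_nonneg_left hz1 hC2nn
    have hm := hsc.norm_image_sub_le_of_norm_hasFDerivWithin_le hg hb hys hyhs
    have e : fderiv ℝ f y h = f (y + h) - f y
        - ((f (y + h) - fderiv ℝ f y (y + h)) - (f y - fderiv ℝ f y y)) := by
      rw [map_add]; abel
    have hfyh : ‖f (y + h)‖ ≤ A * 2^(2*k+1+1) * ρ^2 := by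
      have := hδA (y := y + h) (by rw [dist_zero_right]; linarith)
      rw [norm_pow, norm_norm] at this
      calc ‖f (y + h)‖ ≤ A * ‖y + h‖ ^ (2*k+1+1) := this
        _ ≤ A * (2 * ‖y‖) ^ (2*k+1+1) := by gcongr
        _ = A * 2^(2*k+1+1) * ρ^2 := by rw [mul_pow, hρ2]; ring
    have hfy : ‖f y‖ ≤ A * ρ^2 := by
      have := hδA (y := y) (by rw [dist_zero_right]; linarith)
      rw [norm_pow, norm_norm, hρ2] at this
      exact this
    rw [add_sub_cancel_left] at hm
    have hh2 : C2 * ‖h‖ * ‖h‖ ≤ C2 * ρ^2 := by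
      rw [mul_assoc, sq]
      exact mul_le_mul_of_nonneg_left (mul_le_mul hh hh (norm_nonneg _) hρpos.le) hC2nn
    rw [e]
    calc _ ≤ ‖f (y + h) - f y‖ + ‖(f (y + h) - fderiv ℝ f y (y + h)) - (f y - fderiv ℝ f y y)‖ :=
          norm_sub_le _ _
      _ ≤ ‖f (y + h)‖ + ‖f y‖ + C2 * ‖h‖ * ‖h‖ := by
          have := norm_sub_le (f (y + h)) (f y); linarith
      _ ≤ K * ρ^2 := by rw [hK]; linarith
  have hop : ‖fderiv ℝ f y‖ ≤ K * ρ := by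
    apply ContinuousLinearMap.opNorm_le_bound _ (mul_nonneg hKnn hρpos.le)
    intro x
    by_cases hx : x = 0
    · simp [hx]
    · have hxpos : 0 < ‖x‖ := norm_pos_iff.2 hx
      have hh := hkey ((ρ / ‖x‖) • x) (by
        rw [norm_smul, Real.norm_eq_abs, abs_of_pos (by positivity), div_mul_cancel₀ _ hxpos.ne'])
      rw [map_smul, norm_smul, Real.norm_eq_abs, abs_of_pos (by positivity)] at hh
      have e1 : ρ / ‖x‖ * ‖fderiv ℝ f y x‖ * ‖x‖ = ρ * ‖fderiv ℝ f y x‖ := by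
        field_simp
      have hh' : ρ * ‖fderiv ℝ f y x‖ ≤ ρ * (K * ρ * ‖x‖) := by
        rw [← e1]
        have := mul_le_mul_of_nonneg_right hh hxpos.le
        nlinarith [this]
      exact le_of_mul_le_mul_left hh' hρpos
  rw [norm_pow, norm_norm]
  exact hop

lemma iter_zero_of_flat : ∀ (n : ℕ) {F : Type} [NormedAddCommGroup F] [NormedSpace ℝ F]
    (f : ℝ × ℝ → F), ContDiff ℝ (⊤ : ℕ∞) f → (∀ k : ℕ, f =O[𝓝 0] fun y => ‖y‖ ^ (k+1)) →
    iteratedFDeriv ℝ n f 0 = 0 := by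
  intro n
  induction n with
  | zero =>
    intro F _ _ f hf hflat
    ext m
    rw [iteratedFDeriv_zero_apply]
    obtain ⟨c, hc⟩ := Asymptotics.isBigO_iff.1 (hflat 0)
    have := hc.self_of_nhds
    simpa using this
  | succ n ih =>
    intro F _ _ f hf hflat
    ext m
    rw [iteratedFDeriv_succ_apply_right]
    rw [ih (fderiv ℝ f) (contDiff_infty_iff_fderiv.1 hf).2 (flat_fderiv hf hflat)]
    simp

lemma main2d {ε : ℝ} (hε : 0 < ε) {P Q R : ℝ × ℝ → ℝ}
    (hP : ContDiff ℝ (⊤ : ℕ∞) P) (hQ : ContDiff ℝ (⊤ : ℕ∞) Q) (hR : ContDiff ℝ (⊤ : ℕ∞) R)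
    (hid : ∀ y : ℝ × ℝ, 0 < y.1^2+y.2^2 → y.1^2+y.2^2 < ε →
      (y.1^2+y.2^2) * P y * (Real.log (y.1^2+y.2^2))^2
        + Q y * Real.log (y.1^2+y.2^2) + R y = 0) :
    ∀ n : ℕ, iteratedFDeriv ℝ n P 0 = 0 ∧ iteratedFDeriv ℝ n Q 0 = 0 ∧
      iteratedFDeriv ℝ n R 0 = 0 := by
  have key : ∀ u : ℝ × ℝ, u.1^2 + u.2^2 = 1 → ∀ j : ℕ,
      iteratedDeriv j (fun t : ℝ => P (t • u)) 0 = 0 ∧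
      iteratedDeriv j (fun t : ℝ => Q (t • u)) 0 = 0 ∧
      iteratedDeriv j (fun t : ℝ => R (t • u)) 0 = 0 := by
    intro u hu
    have hray : ContDiff ℝ (⊤ : ℕ∞) (fun t : ℝ => t • u) := contDiff_id.smul contDiff_const
    have hPa : ContDiff ℝ (⊤ : ℕ∞) (fun t : ℝ => P (t • u)) := hP.comp hray
    have hQa : ContDiff ℝ (⊤ : ℕ∞) (fun t : ℝ => Q (t • u)) := hQ.comp hray
    have hRa : ContDiff ℝ (⊤ : ℕ∞) (fun t : ℝ => R (t • u)) := hR.comp hray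
    have hsq : ∀ t : ℝ, ((t • u).1^2 + (t • u).2^2) = t^2 := by
      intro t
      have h1 : (t • u).1 = t * u.1 := rfl
      have h2 : (t • u).2 = t * u.2 := rfl
      rw [h1, h2]
      linear_combination t^2 * hu
    have hδ : (0:ℝ) < Real.sqrt ε := Real.sqrt_pos.mpr hε
    have hid1 : ∀ t : ℝ, 0 < t → t < Real.sqrt ε →
        t^2 * (P (t • u)) * (Real.log (t^2))^2
          + Q (t • u) * Real.log (t^2) + R (t • u) = 0 := by
      intro t ht1 ht2
      have h1 : 0 < (t • u).1^2 + (t • u).2^2 := by rw [hsq]; positivity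
      have h2 : (t • u).1^2 + (t • u).2^2 < ε := by
        rw [hsq]
        exact (Real.lt_sqrt ht1.le).mp ht2
      have h3 := hid (t • u) h1 h2
      rw [hsq] at h3
      linarith [h3]
    obtain ⟨cq, cr, cg⟩ := ray_vanish hPa hQa hRa hδ hid1
    have conclude : ∀ (q : ℝ → ℝ), (∀ i, tc q i = 0) → ∀ j, iteratedDeriv j q 0 = 0 := by
      intro q hc j
      have h := hc j
      rw [tc, div_eq_zero_iff] at h
      exact h.resolve_right (by positivity)
    exact fun j => ⟨conclude _ cg j, conclude _ cq j, conclude _ cr j⟩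
  intro n
  exact ⟨iter_zero_of_flat n P hP (flat_of_rays hP fun u hu j => (key u hu j).1),
    iter_zero_of_flat n Q hQ (flat_of_rays hQ fun u hu j => (key u hu j).2.1),
    iter_zero_of_flat n R hR (flat_of_rays hR fun u hu j => (key u hu j).2.2)⟩

/-- Substituting the profile `F(τ) = τ·log τ` (so `F′(τ) = log τ + 1`,
`τ = |y|²`) into `F′·A + F·B + F·F′·C + F²·D + E = 0` forces the three smooth
functions `A + |y|²·B + |y|²·C`, `C + |y|²·D` and `A + E` to be flat at the
origin. -/
theorem stmt_17 (ε : ℝ) (hε : 0 < ε) (A B C D E : ℝ × ℝ → ℝ)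
    (hA : ContDiff ℝ (⊤ : ℕ∞) A) (hB : ContDiff ℝ (⊤ : ℕ∞) B) (hC : ContDiff ℝ (⊤ : ℕ∞) C)
    (hD : ContDiff ℝ (⊤ : ℕ∞) D) (hE : ContDiff ℝ (⊤ : ℕ∞) E)
    (heq : ∀ y : ℝ × ℝ, 0 < y.1 ^ 2 + y.2 ^ 2 → y.1 ^ 2 + y.2 ^ 2 < ε →
      (Real.log (y.1 ^ 2 + y.2 ^ 2) + 1) * A y +
        ((y.1 ^ 2 + y.2 ^ 2) * Real.log (y.1 ^ 2 + y.2 ^ 2)) * B y +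
          ((y.1 ^ 2 + y.2 ^ 2) * Real.log (y.1 ^ 2 + y.2 ^ 2)) *
              (Real.log (y.1 ^ 2 + y.2 ^ 2) + 1) * C y +
            ((y.1 ^ 2 + y.2 ^ 2) * Real.log (y.1 ^ 2 + y.2 ^ 2)) ^ 2 * D y +
              E y = 0) :
    (∀ n : ℕ, iteratedFDeriv ℝ n
        (fun y : ℝ × ℝ =>
          A y + (y.1 ^ 2 + y.2 ^ 2) * B y + (y.1 ^ 2 + y.2 ^ 2) * C y) 0 = 0) ∧
    (∀ n : ℕ, iteratedFDeriv ℝ n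
        (fun y : ℝ × ℝ => C y + (y.1 ^ 2 + y.2 ^ 2) * D y) 0 = 0) ∧
    (∀ n : ℕ, iteratedFDeriv ℝ n (fun y : ℝ × ℝ => A y + E y) 0 = 0) := by
  have hτ : ContDiff ℝ (⊤ : ℕ∞) (fun y : ℝ × ℝ => y.1 ^ 2 + y.2 ^ 2) :=
    (contDiff_fst.pow 2).add (contDiff_snd.pow 2)
  have hPsm : ContDiff ℝ (⊤ : ℕ∞) (fun y : ℝ × ℝ => C y + (y.1 ^ 2 + y.2 ^ 2) * D y) :=
    hC.add (hτ.mul hD)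
  have hQsm : ContDiff ℝ (⊤ : ℕ∞) (fun y : ℝ × ℝ =>
      A y + (y.1 ^ 2 + y.2 ^ 2) * B y + (y.1 ^ 2 + y.2 ^ 2) * C y) :=
    (hA.add (hτ.mul hB)).add (hτ.mul hC)
  have hRsm : ContDiff ℝ (⊤ : ℕ∞) (fun y : ℝ × ℝ => A y + E y) := hA.add hE
  have hid : ∀ y : ℝ × ℝ, 0 < y.1^2+y.2^2 → y.1^2+y.2^2 < ε →
      (y.1^2+y.2^2) * ((fun y : ℝ × ℝ => C y + (y.1 ^ 2 + y.2 ^ 2) * D y) y)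
          * (Real.log (y.1^2+y.2^2))^2
        + ((fun y : ℝ × ℝ =>
            A y + (y.1 ^ 2 + y.2 ^ 2) * B y + (y.1 ^ 2 + y.2 ^ 2) * C y) y)
          * Real.log (y.1^2+y.2^2)
        + ((fun y : ℝ × ℝ => A y + E y) y) = 0 := by
    intro y h1 h2
    have h := heq y h1 h2
    simp only []
    linear_combination h
  have hall := main2d hε hPsm hQsm hRsm hid
  have hall := main2d hε hPsm hQsm hRsm hid
  exact ⟨fun n => (hall n).2.1, fun n => (hall n).1, fun n => (hall n).2.2⟩
end
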